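/- arXiv:1104.5043 — 3 statements merged into one kernel-verified Lean document; each statement's English description precedes it below -/
import Mathlib

section
/- Let P be a finite set of points, none contained in any disk of a finite disk set I that separates P. If a subset B ⊆ I separates some pair of P, partitioning P into parts P₁,…,P_τ by faces of ℝ² \ ⋃B with τ ≥ 2, and Oⱼ ⊆ I separates Pⱼ for each j, then B ∪ ⋃ⱼ Oⱼ separates P. -/
/-- The Euclidean plane. -/
abbrev Plane := EuclideanSpace ℝ (Fin 2)

/-- `B` separates `s` and `t`: every continuous path from `s` to `t` meets some
set (disk) in `B`. -/
def Separates (B : Set (Set Plane)) (s t : Plane) : Prop :=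
  ∀ γ : Path s t, ∃ u, ∃ d ∈ B, γ u ∈ d

/-!
A path avoiding `⋃ B` has connected range, so it stays in one connected component of the
complement of `⋃ B`. Hence two points of `P` in different faces are separated by `B` itself,
and two points in the same face `F` are separated by `O F`.
-/

theorem connectedComponentIn_eq_of_path {X : Type*} [TopologicalSpace X] {x y : X} {U : Set X}
    (γ : Path x y) (hγ : ∀ t, γ t ∈ U) : connectedComponentIn U x = connectedComponentIn U y :=
  connectedComponentIn_eq <|
    (isConnected_range γ.continuous).isPreconnected.subset_connectedComponentIn
      ⟨0, γ.source⟩ (Set.range_subset_iff.2 hγ) ⟨1, γ.target⟩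

namespace Separates

variable {B B' : Set (Set Plane)} {s t : Plane}

theorem mono (hB : B ⊆ B') (h : Separates B s t) : Separates B' s t := fun γ ↦
  let ⟨u, d, hd, hu⟩ := h γ
  ⟨u, d, hB hd, hu⟩

theorem of_connectedComponentIn_ne
    (h : connectedComponentIn (⋃ d ∈ B, d)ᶜ s ≠ connectedComponentIn (⋃ d ∈ B, d)ᶜ t) :
    Separates B s t := by
  intro γ
  by_contra! hγ
  exact h <| connectedComponentIn_eq_of_path γ fun u ↦ by
    simpa only [Set.mem_compl_iff, Set.mem_iUnion, not_exists, not_and] using hγ u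

end Separates

theorem stmt_7_general (B : Finset (Set Plane))
    (P : Finset Plane)
    (O : Set Plane → Finset (Set Plane))
    (hOsep : ∀ p ∈ P, ∀ q ∈ P, p ≠ q →
      connectedComponentIn (⋃ d ∈ B, d)ᶜ p = connectedComponentIn (⋃ d ∈ B, d)ᶜ q →
      Separates (↑(O (connectedComponentIn (⋃ d ∈ B, d)ᶜ p))) p q) :
    ∀ p ∈ P, ∀ q ∈ P, p ≠ q →
      Separates ((↑B : Set (Set Plane)) ∪ ⋃ F : Set Plane, ↑(O F)) p q := by
  intro p hp q hq hpq
  by_cases hface : connectedComponentIn (⋃ d ∈ B, d)ᶜ p = connectedComponentIn (⋃ d ∈ B, d)ᶜ q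
  · exact (hOsep p hp q hq hpq hface).mono <| Set.subset_union_of_subset_right
      (Set.subset_iUnion (fun F ↦ (O F : Set (Set Plane))) _) _
  · exact (Separates.of_connectedComponentIn_ne (B := ↑B) hface).mono
      Set.subset_union_left

/-- Correctness of the recursive step: let `P` be a finite set of points, none
contained in any disk of a finite disk set `I` separating `P`. Suppose `B ⊆ I`
separates some pair of `P` (so `P` is partitioned into at least two parts by the
faces of the complement of `⋃ B`), and for each face `F` a set `O F ⊆ I`
separates the part of `P` lying in `F`. Then `B` together with all the `O F`
separates `P`. -/
theorem stmt_7 (I B : Finset (Set Plane)) (hBI : B ⊆ I)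
    (hI : ∀ d ∈ I, ∃ (c : Plane) (r : ℝ), 0 < r ∧ d = Metric.closedBall c r)
    (P : Finset Plane)
    (hout : ∀ p ∈ P, ∀ d ∈ I, p ∉ d)
    (hIsep : ∀ p ∈ P, ∀ q ∈ P, p ≠ q → Separates (↑I) p q)
    (hpair : ∃ s ∈ P, ∃ t ∈ P, s ≠ t ∧ Separates (↑B) s t)
    (O : Set Plane → Finset (Set Plane)) (hO : ∀ F, O F ⊆ I)
    (hOsep : ∀ p ∈ P, ∀ q ∈ P, p ≠ q →
      connectedComponentIn (⋃ d ∈ B, d)ᶜ p = connectedComponentIn (⋃ d ∈ B, d)ᶜ q →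
      Separates (↑(O (connectedComponentIn (⋃ d ∈ B, d)ᶜ p))) p q) :
    ∀ p ∈ P, ∀ q ∈ P, p ≠ q →
      Separates ((↑B : Set (Set Plane)) ∪ ⋃ F : Set Plane, ↑(O F)) p q :=
  stmt_7_general B P O hOsep
end

section
/- Let OPT be a finite set of disks separating a finite point set P (no point of P in any disk). For each p ∈ P let F_p ⊆ OPT be the disks contributing to the boundary of the face of ℝ² \ ⋃OPT containing p. Then for any point q ≠ p in P, the set F_p separates p and q. -/
/-!
A path from `p` to `q` must meet a disk, so it leaves the face `F` containing `p` and, being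
connected, crosses `∂F`. The crossing point lies outside the open set `(⋃ OPT)ᶜ` (a point of
that set in the closure of a component belongs to the component), so it lies in some disk
`d ∈ OPT`; as `F` avoids `d`, the point is also in the closure of `dᶜ`, hence in `∂d ∩ ∂F`.
-/

open Set

section

variable {X : Type*} [TopologicalSpace X]

theorem IsPreconnected.inter_frontier_nonempty {s t : Set X} (ht : IsPreconnected t)
    (hts : (t ∩ s).Nonempty) (hts' : (t \ s).Nonempty) : (t ∩ frontier s).Nonempty := by
  by_contra hempty
  have hdisj : ∀ x ∈ t, x ∉ frontier s := fun x hxt hxs => hempty ⟨x, hxt, hxs⟩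
  have hcover : t ⊆ interior s ∪ (closure s)ᶜ := by
    intro x hxt
    by_cases hx : x ∈ closure s
    · exact Or.inl (by_contra fun h => hdisj x hxt ⟨hx, h⟩)
    · exact Or.inr hx
  obtain ⟨x, hxt, hxs⟩ := hts
  have hx_int : x ∈ interior s :=
    (hcover hxt).resolve_right (not_not_intro (subset_closure hxs))
  have ht_int : t ⊆ interior s :=
    ht.subset_left_of_subset_union isOpen_interior isClosed_closure.isOpen_compl
      (disjoint_compl_right.mono_left interior_subset_closure) hcover ⟨x, hxt, hx_int⟩
  obtain ⟨y, hyt, hys⟩ := hts'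
  exact hys (interior_subset (ht_int hyt))

theorem IsOpen.frontier_connectedComponentIn_subset_compl [LocallyConnectedSpace X]
    {U : Set X} (hU : IsOpen U) (x : X) : frontier (connectedComponentIn U x) ⊆ Uᶜ := by
  intro y hy hyU
  obtain ⟨z, hz_y, hz_x⟩ := mem_closure_iff.mp hy.1 _ hU.connectedComponentIn
    (mem_connectedComponentIn hyU)
  have hy_mem : y ∈ connectedComponentIn U x := by
    rw [connectedComponentIn_eq hz_x, ← connectedComponentIn_eq hz_y]
    exact mem_connectedComponentIn hyU
  exact hy.2 (hU.connectedComponentIn.interior_eq.symm ▸ hy_mem)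

theorem exists_mem_frontier_of_mem_frontier_connectedComponentIn [LocallyConnectedSpace X]
    {S : Finset (Set X)} (hS : ∀ d ∈ S, IsClosed d) {x y : X}
    (hy : y ∈ frontier (connectedComponentIn (⋃ d ∈ S, d)ᶜ x)) :
    ∃ d ∈ S, y ∈ frontier d := by
  have hU : IsOpen (⋃ d ∈ S, d)ᶜ :=
    (S.finite_toSet.isClosed_biUnion hS).isOpen_compl
  have hy_union : y ∈ ⋃ d ∈ S, d :=
    not_not.mp (hU.frontier_connectedComponentIn_subset_compl x hy)
  obtain ⟨d, hd, hyd⟩ := mem_iUnion₂.mp hy_union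
  have hface_subset : connectedComponentIn (⋃ d ∈ S, d)ᶜ x ⊆ dᶜ :=
    (connectedComponentIn_subset _ x).trans
      (compl_subset_compl.mpr fun z hz => mem_iUnion₂.mpr ⟨d, hd, hz⟩)
  refine ⟨d, hd, ?_⟩
  rw [frontier_eq_closure_inter_closure, (hS d hd).closure_eq]
  exact ⟨hyd, closure_mono hface_subset hy.1⟩

end

/-- Let `OPT` be a finite set of disks separating a finite point set `P`, with no
point of `P` in any disk. For `p ∈ P`, let `F_p ⊆ OPT` be the disks contributing to
the boundary of the face (connected component of the complement of `⋃ OPT`)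
containing `p`, i.e. whose boundary meets the boundary of that face. Then for any
`q ∈ P` with `q ≠ p`, the set `F_p` separates `p` and `q`. -/
theorem stmt_8 (OPT : Finset (Set Plane))
    (hOPT : ∀ d ∈ OPT, ∃ (c : Plane) (r : ℝ), 0 < r ∧ d = Metric.closedBall c r)
    (P : Finset Plane)
    (hout : ∀ p ∈ P, ∀ d ∈ OPT, p ∉ d)
    (hsep : ∀ p ∈ P, ∀ q ∈ P, p ≠ q → Separates (↑OPT) p q)
    (p : Plane) (hp : p ∈ P) (q : Plane) (hq : q ∈ P) (hpq : q ≠ p) :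
    Separates
      {d | d ∈ OPT ∧
        (frontier d ∩
          frontier (connectedComponentIn (⋃ d' ∈ OPT, d')ᶜ p)).Nonempty}
      p q := by
  intro γ
  set F := connectedComponentIn (⋃ d' ∈ OPT, d')ᶜ p
  have hclosed : ∀ d ∈ OPT, IsClosed d := fun d hd => by
    obtain ⟨c, r, -, rfl⟩ := hOPT d hd
    exact Metric.isClosed_closedBall
  have hpF : p ∈ F := mem_connectedComponentIn (by simpa using hout p hp)
  obtain ⟨u, d₀, hd₀, hγu⟩ := hsep p hp q hq hpq.symm γ
  have hγu_notin : γ u ∉ F := fun h =>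
    connectedComponentIn_subset _ p h (mem_iUnion₂.mpr ⟨d₀, hd₀, hγu⟩)
  obtain ⟨_, ⟨t, rfl⟩, hγt⟩ := (isPreconnected_range γ.continuous).inter_frontier_nonempty
    ⟨p, ⟨0, γ.source⟩, hpF⟩ ⟨γ u, mem_range_self u, hγu_notin⟩
  obtain ⟨d, hd, hγtd⟩ := exists_mem_frontier_of_mem_frontier_connectedComponentIn hclosed hγt
  exact ⟨t, d, ⟨hd, γ t, hγtd, hγt⟩, (hclosed d hd).frontier_subset hγtd⟩
end

section
/- Let σ = d₁,…,dₘ be a sequence of disks such that consecutive disks intersect and non-consecutive disks are disjoint, let s' ∈ d₁, t' ∈ dₘ, and choose xᵢ ∈ dᵢ ∩ dᵢ₊₁ for each i. Then the polygonal path s', x₁, x₂, …, x_{m-1}, t' is contained in ⋃ᵢ dᵢ, and its intersection with each dᵢ is connected. -/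
/-!
Every segment `[v j, v (j+1)]` of the path lies in the convex disk `d j`, which gives the first
claim. If `[v j, v (j+1)]` meets `d i`, then `d j` meets `d i`, so `|i - j| ≤ 1` and the segment
contains `v i` or `v (i+1)`. Thus each nonempty convex piece `[v j, v (j+1)] ∩ d i` shares an
endpoint with the convex piece `[v i, v (i+1)] ∩ d i`, and the union of all pieces is connected.
-/

open Set

theorem isPreconnected_iUnion_of_mem_or_mem {X ι : Type*} [TopologicalSpace X] {P : ι → Set X}
    (hP : ∀ j, IsPreconnected (P j)) {i : ι} {p q : X} (hp : p ∈ P i) (hq : q ∈ P i)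
    (hpq : ∀ j, (P j).Nonempty → p ∈ P j ∨ q ∈ P j) : IsPreconnected (⋃ j, P j) := by
  refine isPreconnected_of_forall p fun y hy => ?_
  obtain ⟨j, hj⟩ := mem_iUnion.mp hy
  refine ⟨P i ∪ P j, union_subset (subset_iUnion P i) (subset_iUnion P j), Or.inl hp,
    Or.inr hj, ?_⟩
  rcases hpq j ⟨y, hj⟩ with h | h
  · exact (hP i).union p hp h (hP j)
  · exact (hP i).union q hq h (hP j)

section PolygonalChain

variable {E : Type*} {m : ℕ} {d : Fin (m + 1) → Set E} {v : Fin (m + 2) → E}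

theorem vertex_castSucc_mem (h0 : v 0 ∈ d 0)
    (hmid : ∀ i : Fin m, v i.succ.castSucc ∈ d i.castSucc ∩ d i.succ) (j : Fin (m + 1)) :
    v j.castSucc ∈ d j := by
  induction j using Fin.cases with
  | zero => exact h0
  | succ i => exact (hmid i).2

theorem vertex_succ_mem (hlast : v (Fin.last (m + 1)) ∈ d (Fin.last m))
    (hmid : ∀ i : Fin m, v i.succ.castSucc ∈ d i.castSucc ∩ d i.succ) (j : Fin (m + 1)) :
    v j.succ ∈ d j := by
  induction j using Fin.lastCases with
  | last => rwa [Fin.succ_last]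
  | cast i => rw [Fin.succ_castSucc]; exact (hmid i).1

theorem vertex_mem_of_segment_inter_nonempty [AddCommGroup E] [Module ℝ E]
    (hdisj : ∀ i j : Fin (m + 1), (i : ℕ) + 2 ≤ (j : ℕ) → Disjoint (d i) (d j))
    (hseg : ∀ j, segment ℝ (v j.castSucc) (v j.succ) ⊆ d j)
    (hleft : ∀ j, v j.castSucc ∈ d j) (hright : ∀ j, v j.succ ∈ d j) {i j : Fin (m + 1)}
    (hne : (segment ℝ (v j.castSucc) (v j.succ) ∩ d i).Nonempty) :
    v i.castSucc ∈ segment ℝ (v j.castSucc) (v j.succ) ∩ d i ∨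
      v i.succ ∈ segment ℝ (v j.castSucc) (v j.succ) ∩ d i := by
  obtain ⟨y, hyj, hyi⟩ := hne
  have hmeet : ¬Disjoint (d j) (d i) := fun h => h.ne_of_mem (hseg j hyj) hyi rfl
  have hij : ¬(i : ℕ) + 2 ≤ j := fun h => hmeet (hdisj i j h).symm
  have hji : ¬(j : ℕ) + 2 ≤ i := fun h => hmeet (hdisj j i h)
  rcases (by omega : j = i ∨ (j : ℕ) + 1 = i ∨ (i : ℕ) + 1 = j) with rfl | h | h
  · exact Or.inl ⟨left_mem_segment _ _ _, hleft j⟩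
  · have hv : j.succ = i.castSucc := by ext; simpa using h
    exact Or.inl ⟨hv ▸ right_mem_segment _ _ _, hleft i⟩
  · have hv : j.castSucc = i.succ := by ext; simpa using h.symm
    exact Or.inr ⟨hv ▸ left_mem_segment _ _ _, hright i⟩

end PolygonalChain

/-- Let `d 0, …, d m` be a sequence of closed disks such that non-consecutive disks
are disjoint, let `s' ∈ d 0` and `t' ∈ d m`, and let `x i ∈ d i ∩ d (i+1)` for each
`i`. Consider the polygonal path through the vertices `s', x 0, …, x (m-1), t'`
(the union of the consecutive segments). Then this path is contained in the union
of the disks, and its intersection with each disk `d i` is connected. -/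
theorem stmt_10 (m : ℕ) (d : Fin (m + 1) → Set Plane)
    (hd : ∀ i, ∃ (c : Plane) (r : ℝ), 0 < r ∧ d i = Metric.closedBall c r)
    (hdisj : ∀ i j : Fin (m + 1), (i : ℕ) + 2 ≤ (j : ℕ) → Disjoint (d i) (d j))
    (s' t' : Plane) (hs' : s' ∈ d 0) (ht' : t' ∈ d (Fin.last m))
    (x : Fin m → Plane) (hx : ∀ i : Fin m, x i ∈ d i.castSucc ∩ d i.succ)
    (vert : Fin (m + 2) → Plane)
    (hv0 : vert 0 = s') (hvlast : vert (Fin.last (m + 1)) = t')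
    (hvmid : ∀ i : Fin m, vert i.succ.castSucc = x i) :
    (⋃ i : Fin (m + 1), segment ℝ (vert i.castSucc) (vert i.succ)) ⊆
        (⋃ i, d i) ∧
      ∀ i : Fin (m + 1),
        IsConnected ((⋃ j : Fin (m + 1), segment ℝ (vert j.castSucc) (vert j.succ))
          ∩ d i) := by
  subst hv0 hvlast
  have hmid : ∀ i : Fin m, vert i.succ.castSucc ∈ d i.castSucc ∩ d i.succ := fun i =>
    hvmid i ▸ hx i
  have hconv : ∀ j, Convex ℝ (d j) := fun j => by
    obtain ⟨c, r, -, h⟩ := hd j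
    exact h ▸ convex_closedBall c r
  have hleft := vertex_castSucc_mem hs' hmid
  have hright := vertex_succ_mem ht' hmid
  have hseg : ∀ j, segment ℝ (vert j.castSucc) (vert j.succ) ⊆ d j := fun j =>
    (hconv j).segment_subset (hleft j) (hright j)
  refine ⟨iUnion_mono hseg, fun i => ?_⟩
  rw [iUnion_inter]
  have hp : vert i.castSucc ∈ segment ℝ (vert i.castSucc) (vert i.succ) ∩ d i :=
    ⟨left_mem_segment _ _ _, hleft i⟩
  exact ⟨⟨_, mem_iUnion_of_mem i hp⟩,
    isPreconnected_iUnion_of_mem_or_mem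
      (fun j => ((convex_segment _ _).inter (hconv i)).isPreconnected) hp
      ⟨right_mem_segment _ _ _, hright i⟩
      (fun j => vertex_mem_of_segment_inter_nonempty hdisj hseg hleft hright)⟩
end
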